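/- The group G with presentation ⟨a₁, a₂, b₁, b₂ | [a₁,a₂] = [b₁,b₂] = [a₁,b₁] = [a₁,b₂] = [b₁,a₂] = 1⟩ is isomorphic to the direct product ℤ² × F₂, where F₂ is the free group of rank two, via an isomorphism sending a₁, b₁ to the two standard generators of ℤ² and a₂, b₂ to the two free generators of F₂. -/

import Mathlib

/-- Generators of Birman's presentation of π₁ of the configuration space of two
ordered points on the torus. -/
inductive BirmanGen : Type
  | a1 | a2 | b1 | b2

open FreeGroup in
open scoped commutatorElement in
/-- The relators [a₁,a₂], [b₁,b₂], [a₁,b₁], [a₁,b₂], [b₁,a₂]. -/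
def birmanRels : Set (FreeGroup BirmanGen) :=
  {⁅of BirmanGen.a1, of BirmanGen.a2⁆, ⁅of BirmanGen.b1, of BirmanGen.b2⁆,
   ⁅of BirmanGen.a1, of BirmanGen.b1⁆, ⁅of BirmanGen.a1, of BirmanGen.b2⁆,
   ⁅of BirmanGen.b1, of BirmanGen.a2⁆}

/-!
The relations say precisely that `a₁` and `b₁` commute with each other and with every
generator, so they generate a central copy of `ℤ²`, while `a₂` and `b₂` are unconstrained.
Hence `(m, w) ↦ a₁ ^ m₁ * b₁ ^ m₂ * w(a₂, b₂)` is a homomorphism `ℤ² × F₂ → G` (its two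
factors commute), and it is inverse to the map `G → ℤ² × F₂` defined on generators, as both
composites fix generators.
-/

open scoped commutatorElement

namespace PresentedGroup

variable {α : Type*} {rels : Set (FreeGroup α)}

theorem commute_of_of_commutatorElement_mem {x y : α}
    (h : ⁅FreeGroup.of x, FreeGroup.of y⁆ ∈ rels) :
    Commute (of x : PresentedGroup rels) (of y) := by
  rw [← commutatorElement_eq_one_iff_commute]
  exact (map_commutatorElement (mk rels) _ _).symm.trans (one_of_mem h)

theorem commute_of_forall_commute_of {g : PresentedGroup rels} (h : ∀ x, Commute g (of x))
    (y : PresentedGroup rels) : Commute g y := by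
  have hy : y ∈ Subgroup.centralizer {g} :=
    generated_by rels _ (fun x => Subgroup.mem_centralizer_singleton_iff.2 (h x).symm.eq) y
  exact (Subgroup.mem_centralizer_singleton_iff.1 hy).symm

end PresentedGroup

namespace Birman

open BirmanGen PresentedGroup

def genImage : BirmanGen → Multiplicative (ℤ × ℤ) × FreeGroup Bool
  | a1 => (Multiplicative.ofAdd (1, 0), 1)
  | b1 => (Multiplicative.ofAdd (0, 1), 1)
  | a2 => (1, FreeGroup.of false)
  | b2 => (1, FreeGroup.of true)

-- Each relator is a commutator with first entry `a₁` or `b₁`, whose image is central.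
theorem lift_genImage_eq_one_of_mem_birmanRels :
    ∀ r ∈ birmanRels, FreeGroup.lift genImage r = 1 := by
  intro r hr
  rcases hr with rfl | rfl | rfl | rfl | rfl <;>
    rw [map_commutatorElement, FreeGroup.lift_apply_of, FreeGroup.lift_apply_of,
      commutatorElement_eq_one_iff_commute] <;>
    exact Commute.prod (Commute.all _ _) (Commute.one_left _)

def toProd : PresentedGroup birmanRels →* Multiplicative (ℤ × ℤ) × FreeGroup Bool :=
  toGroup lift_genImage_eq_one_of_mem_birmanRels

theorem toProd_of (x : BirmanGen) : toProd (of x) = genImage x :=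
  toGroup.of _

theorem commute_of_a1 (g : PresentedGroup birmanRels) : Commute (of a1) g := by
  refine commute_of_forall_commute_of (fun x => ?_) g
  cases x
  case a1 => exact .refl _
  all_goals exact commute_of_of_commutatorElement_mem (by simp [birmanRels])

theorem commute_of_b1 (g : PresentedGroup birmanRels) : Commute (of b1) g := by
  refine commute_of_forall_commute_of (fun x => ?_) g
  cases x
  case a1 => exact (commute_of_a1 _).symm
  case b1 => exact .refl _
  all_goals exact commute_of_of_commutatorElement_mem (by simp [birmanRels])

def ofZSq : Multiplicative (ℤ × ℤ) →* PresentedGroup birmanRels where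
  toFun m := of a1 ^ m.toAdd.1 * of b1 ^ m.toAdd.2
  map_one' := by simp
  map_mul' m n := by
    simp only [toAdd_mul, Prod.fst_add, Prod.snd_add, zpow_add]
    exact ((commute_of_b1 _).zpow_zpow _ _).symm.mul_mul_mul_comm _ _

def ofFreeGroup : FreeGroup Bool →* PresentedGroup birmanRels :=
  FreeGroup.lift fun b => bif b then of b2 else of a2

def ofProd : Multiplicative (ℤ × ℤ) × FreeGroup Bool →* PresentedGroup birmanRels :=
  ofZSq.noncommCoprod ofFreeGroup fun _ _ =>
    ((commute_of_a1 _).zpow_left _).mul_left ((commute_of_b1 _).zpow_left _)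

theorem ofProd_apply (m : Multiplicative (ℤ × ℤ)) (w : FreeGroup Bool) :
    ofProd (m, w) = ofZSq m * ofFreeGroup w :=
  rfl

theorem ofProd_comp_toProd : ofProd.comp toProd = MonoidHom.id _ :=
  PresentedGroup.ext fun x => by
    cases x <;> simp [toProd_of, genImage, ofProd, ofZSq, ofFreeGroup]

theorem toProd_ofZSq (m : Multiplicative (ℤ × ℤ)) : toProd (ofZSq m) = (m, 1) := by
  simp only [ofZSq, MonoidHom.coe_mk, OneHom.coe_mk, map_mul, map_zpow, toProd_of, genImage,
    Prod.pow_mk, one_zpow, Prod.mk_mul_mk, mul_one, Prod.mk.injEq, and_true]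
  rw [← ofAdd_zsmul, ← ofAdd_zsmul, ← ofAdd_add]
  ext <;> simp

theorem toProd_ofFreeGroup (w : FreeGroup Bool) : toProd (ofFreeGroup w) = (1, w) := by
  refine DFunLike.congr_fun (FreeGroup.ext_hom (toProd.comp ofFreeGroup) (.inr _ _) ?_) w
  intro b
  cases b <;> simp [ofFreeGroup, toProd_of, genImage]

theorem toProd_comp_ofProd : toProd.comp ofProd = MonoidHom.id _ := by
  ext ⟨m, w⟩ : 1
  rw [MonoidHom.comp_apply, ofProd_apply, map_mul, toProd_ofZSq,
    toProd_ofFreeGroup, Prod.mk_mul_mk, mul_one, one_mul, MonoidHom.id_apply]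

end Birman

/-- G = ⟨a₁,a₂,b₁,b₂ | [a₁,a₂] = [b₁,b₂] = [a₁,b₁] = [a₁,b₂] = [b₁,a₂] = 1⟩ is isomorphic
to ℤ² × F₂ via an isomorphism sending a₁, b₁ to the standard generators of ℤ² and
a₂, b₂ to the free generators of F₂. -/
theorem stmt_10 :
    ∃ e : PresentedGroup birmanRels ≃* Multiplicative (ℤ × ℤ) × FreeGroup Bool,
      e (PresentedGroup.of BirmanGen.a1) = (Multiplicative.ofAdd ((1, 0) : ℤ × ℤ), 1) ∧
      e (PresentedGroup.of BirmanGen.b1) = (Multiplicative.ofAdd ((0, 1) : ℤ × ℤ), 1) ∧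
      e (PresentedGroup.of BirmanGen.a2) = (1, FreeGroup.of false) ∧
      e (PresentedGroup.of BirmanGen.b2) = (1, FreeGroup.of true) :=
  open Birman in
  ⟨toProd.toMulEquiv ofProd ofProd_comp_toProd toProd_comp_ofProd,
    toProd_of _, toProd_of _, toProd_of _, toProd_of _⟩
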